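/- Let Ω be the disjoint union of nonempty pairwise disjoint blocks X_1, …, X_n, let 𝒮 = {I ⊆ Ω : |I ∩ X_i| ≤ 1 for all i} be the independent sets of the associated partition matroid, and let f : 2^Ω → ℝ be monotonically increasing and submodular with f(∅) = 0. Define the greedy sequence I_0 = ∅ and, for k = 0, …, n−1, I_{k+1} = I_k ∪ {x*} where x* maximizes f(I_k ∪ {x}) − f(I_k) over all x ∈ Ω with I_k ∪ {x} ∈ 𝒮. Then the greedy output I_n satisfies f(I_n) ≥ (1/2) · max_{I ∈ 𝒮} f(I). -/
import Mathlib


open Finset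

section helpers
variable {Ω : Type*} [DecidableEq Ω] (f : Finset Ω → ℝ)

lemma f_union_ge (hmono : ∀ (A : Finset Ω) (x : Ω), x ∉ A → f (insert x A) ≥ f A) :
    ∀ (S A : Finset Ω), f A ≤ f (A ∪ S) := by
  intro S
  induction S using Finset.induction_on with
  | empty => simp
  | @insert a S ha ih =>
    intro A
    have h1 : f A ≤ f (A ∪ S) := ih A
    have h2 : A ∪ insert a S = insert a (A ∪ S) := by
      ext z; simp [or_comm, or_assoc, or_left_comm]
    rw [h2]
    by_cases hz : a ∈ A ∪ S
    · rw [Finset.insert_eq_self.mpr hz]; exact h1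
    · exact le_trans h1 (hmono _ _ hz)

lemma f_subset_le (hmono : ∀ (A : Finset Ω) (x : Ω), x ∉ A → f (insert x A) ≥ f A)
    {A B : Finset Ω} (h : A ⊆ B) : f A ≤ f B := by
  have := f_union_ge f hmono (B \ A) A
  rwa [Finset.union_sdiff_of_subset h] at this

lemma sum_marginal
    (hsub : ∀ (A B : Finset Ω), A ⊆ B → ∀ x, x ∉ B →
      f (insert x A) - f A ≥ f (insert x B) - f B)
    (B : Finset Ω) (A : Ω → Finset Ω) :
    ∀ T : Finset Ω, (∀ j ∈ T, j ∉ B) → (∀ j ∈ T, A j ⊆ B) →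
      f (B ∪ T) ≤ f B + ∑ j ∈ T, (f (insert j (A j)) - f (A j)) := by
  intro T
  induction T using Finset.induction_on with
  | empty => simp
  | @insert a T ha ih =>
    intro hTB hAB
    have hIH := ih (fun j hj => hTB j (mem_insert_of_mem hj))
      (fun j hj => hAB j (mem_insert_of_mem hj))
    have haBT : a ∉ B ∪ T := by
      simp only [mem_union, not_or]
      exact ⟨hTB a (mem_insert_self a T), ha⟩
    have hAa : A a ⊆ B ∪ T := (hAB a (mem_insert_self a T)).trans subset_union_left
    have hkey := hsub (A a) (B ∪ T) hAa a haBT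
    have heq : B ∪ insert a T = insert a (B ∪ T) := by
      ext z; simp [or_comm, or_assoc, or_left_comm]
    rw [heq, Finset.sum_insert ha]
    linarith

end helpers

/-- greedy maximization of a monotonically increasing submodular
function `f` with `f(∅) = 0` over the independent sets
`𝒮 = {I : |I ∩ X i| ≤ 1 for all i}` of a partition matroid with nonempty
pairwise disjoint blocks `X 1, …, X n` covering `Ω` yields, after `n` steps,
a set `I n` with `f(I n) ≥ (1/2) · max_{I ∈ 𝒮} f(I)`.  The greedy sequence
`I` starts from `I 0 = ∅` and at each step `k < n` inserts a new element `x`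
maximizing the marginal utility `f(I k ∪ {y}) − f(I k)` over all feasible
`y`. -/
theorem greedy_half_approximation {Ω : Type*} [Fintype Ω] [DecidableEq Ω]
    (n : ℕ) (X : Fin n → Finset Ω)
    (hne : ∀ i, (X i).Nonempty)
    (hblocks : ∀ i j, i ≠ j → Disjoint (X i) (X j))
    (hcover : Finset.univ.biUnion X = (Finset.univ : Finset Ω))
    (f : Finset Ω → ℝ)
    (hmono : ∀ (A : Finset Ω) (x : Ω), x ∉ A → f (insert x A) ≥ f A)
    (hsub : ∀ (A B : Finset Ω), A ⊆ B → ∀ x, x ∉ B →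
      f (insert x A) - f A ≥ f (insert x B) - f B)
    (hf0 : f ∅ = 0)
    (I : ℕ → Finset Ω) (hI0 : I 0 = ∅)
    (hstep : ∀ k < n, ∃ x, x ∉ I k ∧
      (∀ i, ((insert x (I k)) ∩ X i).card ≤ 1) ∧
      I (k + 1) = insert x (I k) ∧
      ∀ y, (∀ i, ((insert y (I k)) ∩ X i).card ≤ 1) →
        f (insert y (I k)) - f (I k) ≤ f (insert x (I k)) - f (I k)) :
    f (I n) ≥ (1 / 2 : ℝ) *
      (Finset.univ.filter (fun J : Finset Ω => ∀ i, (J ∩ X i).card ≤ 1)).sup'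
        (Finset.filter_nonempty_iff.mpr
          ⟨∅, Finset.mem_univ _, fun i => by simp⟩) f := by
  -- basic facts about the greedy chain
  have hmonoI : ∀ m k, m ≤ k → k ≤ n → I m ⊆ I k := by
    intro m k hmk hkn
    induction k with
    | zero =>
      have : m = 0 := Nat.le_zero.mp hmk
      subst this; exact subset_rfl
    | succ k ih =>
      rcases Nat.lt_or_ge m (k+1) with h | h
      · have hmk' : m ≤ k := Nat.lt_succ_iff.mp h
        obtain ⟨x, -, -, hIeq, -⟩ := hstep k (Nat.lt_of_succ_le hkn)
        exact (ih hmk' (Nat.le_of_succ_le hkn)).trans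
          (by rw [hIeq]; exact Finset.subset_insert _ _)
      · have : m = k + 1 := le_antisymm hmk h
        subst this; exact subset_rfl
  have hfeas : ∀ m ≤ n, ∀ i, ((I m) ∩ X i).card ≤ 1 := by
    intro m hm i
    cases m with
    | zero => simp [hI0]
    | succ k =>
      obtain ⟨x, -, hxfeas, hIeq, -⟩ := hstep k (Nat.lt_of_succ_le hm)
      rw [hIeq]; exact hxfeas i
  have hcard : ∀ m ≤ n, (I m).card = m := by
    intro m hm
    induction m with
    | zero => simp [hI0]
    | succ k ih =>
      obtain ⟨x, hx, -, hIeq, -⟩ := hstep k (Nat.lt_of_succ_le hm)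
      rw [hIeq, Finset.card_insert_of_notMem hx, ih (Nat.le_of_succ_le hm)]
  have hgain_nonneg : ∀ m < n, 0 ≤ f (I (m+1)) - f (I m) := by
    intro m hm
    obtain ⟨x, hx, -, hIeq, -⟩ := hstep m hm
    rw [hIeq]
    have := hmono (I m) x hx
    linarith
  have hadded : ∀ k ≤ n, ∀ y ∈ I k, ∃ m, m < k ∧ y ∉ I m ∧ y ∈ I (m+1) := by
    intro k
    induction k with
    | zero => intro _ y hy; rw [hI0] at hy; exact absurd hy (Finset.notMem_empty y)
    | succ k ih =>
      intro hk y hy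
      by_cases hyk : y ∈ I k
      · obtain ⟨m, hm, h1, h2⟩ := ih (Nat.le_of_succ_le hk) y hyk
        exact ⟨m, Nat.lt_succ_of_lt hm, h1, h2⟩
      · exact ⟨k, Nat.lt_succ_self k, hyk, hy⟩
  -- every block contains an element of I n
  have hblockfull : ∀ i, ∃ y ∈ I n, y ∈ X i := by
    intro i0
    by_contra hcon
    push_neg at hcon
    have hempty : I n ∩ X i0 = ∅ := by
      ext z; simp only [Finset.mem_inter, Finset.notMem_empty, iff_false, not_and]
      exact fun hz => hcon z hz
    have hdisj : ∀ i₁ ∈ (univ : Finset (Fin n)), ∀ i₂ ∈ univ, i₁ ≠ i₂ →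
        Disjoint (I n ∩ X i₁) (I n ∩ X i₂) := by
      intro i₁ _ i₂ _ hne'
      exact ((hblocks i₁ i₂ hne').mono inter_subset_right inter_subset_right)
    have hbi : (univ : Finset (Fin n)).biUnion (fun i => I n ∩ X i) = I n := by
      ext z
      simp only [Finset.mem_biUnion, Finset.mem_inter, Finset.mem_univ, true_and]
      constructor
      · rintro ⟨i, hz, -⟩; exact hz
      · intro hz
        have : z ∈ univ.biUnion X := by rw [hcover]; exact Finset.mem_univ z
        obtain ⟨i, -, hzi⟩ := Finset.mem_biUnion.mp this
        exact ⟨i, hz, hzi⟩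
    have hsum : ∑ i, (I n ∩ X i).card = n := by
      rw [← Finset.card_biUnion hdisj, hbi]; exact hcard n le_rfl
    have hlt : ∑ i, (I n ∩ X i).card < ∑ _i : Fin n, 1 := by
      apply Finset.sum_lt_sum
      · intro i _; exact hfeas n le_rfl i
      · exact ⟨i0, Finset.mem_univ i0, by rw [hempty]; simp⟩
    simp only [Finset.sum_const, smul_eq_mul, mul_one, Finset.card_univ,
      Fintype.card_fin, hsum] at hlt
    exact lt_irrefl n hlt
  -- each element belongs to a block
  have hex : ∀ ω : Ω, ∃ i, ω ∈ X i := by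
    intro ω
    have : ω ∈ univ.biUnion X := by rw [hcover]; exact Finset.mem_univ ω
    obtain ⟨i, -, hi⟩ := Finset.mem_biUnion.mp this
    exact ⟨i, hi⟩
  choose blk hblk using hex
  -- main bound: every feasible J has f J ≤ 2 f (I n)
  have hkey : ∀ J ∈ Finset.univ.filter (fun J : Finset Ω => ∀ i, (J ∩ X i).card ≤ 1),
      f J ≤ 2 * f (I n) := by
    intro J hJ
    have hJfeas : ∀ i, (J ∩ X i).card ≤ 1 := (Finset.mem_filter.mp hJ).2
    set T := J \ I n with hT
    have hTnotin : ∀ j ∈ T, j ∉ I n := fun j hj => (Finset.mem_sdiff.mp hj).2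
    have hTJ : ∀ j ∈ T, j ∈ J := fun j hj => (Finset.mem_sdiff.mp hj).1
    -- assign to each j ∈ T a greedy step
    have hmain : ∀ j ∈ T, ∃ m, m < n ∧ (I m ∩ X (blk j) = ∅) ∧
        ∃ y, y ∈ X (blk j) ∧ y ∉ I m ∧ y ∈ I (m+1) := by
      intro j hj
      obtain ⟨y, hyIn, hyX⟩ := hblockfull (blk j)
      obtain ⟨m, hm, hy1, hy2⟩ := hadded n le_rfl y hyIn
      refine ⟨m, hm, ?_, y, hyX, hy1, hy2⟩
      ext z
      simp only [Finset.mem_inter, Finset.notMem_empty, iff_false, not_and]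
      intro hzm hzX
      have hzIn : z ∈ I n := hmonoI m n (Nat.le_of_lt hm) le_rfl hzm
      have hzy : z = y := Finset.card_le_one.mp (hfeas n le_rfl (blk j))
        z (Finset.mem_inter.mpr ⟨hzIn, hzX⟩) y (Finset.mem_inter.mpr ⟨hyIn, hyX⟩)
      exact hy1 (hzy ▸ hzm)
    choose! step hlt hempty hy using hmain
    -- feasibility of insert j (I (step j))
    have hfeasins : ∀ j ∈ T, ∀ i, ((insert j (I (step j))) ∩ X i).card ≤ 1 := by
      intro j hj i
      by_cases hib : i = blk j
      · subst hib
        have hsub' : insert j (I (step j)) ∩ X (blk j) ⊆ {j} := by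
          intro z hz
          obtain ⟨hz1, hz2⟩ := Finset.mem_inter.mp hz
          rcases Finset.mem_insert.mp hz1 with h | h
          · simp [h]
          · exfalso
            have : z ∈ I (step j) ∩ X (blk j) := Finset.mem_inter.mpr ⟨h, hz2⟩
            rw [hempty j hj] at this
            exact Finset.notMem_empty z this
        exact le_trans (Finset.card_le_card hsub') (by simp)
      · have hjX : j ∉ X i := fun hjXi =>
          Finset.disjoint_left.mp (hblocks i (blk j) hib) hjXi (hblk j)
        have : insert j (I (step j)) ∩ X i = I (step j) ∩ X i := by
          ext z
          simp only [Finset.mem_inter, Finset.mem_insert]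
          constructor
          · rintro ⟨h | h, hz⟩
            · exact absurd (h ▸ hz) hjX
            · exact ⟨h, hz⟩
          · rintro ⟨h, hz⟩; exact ⟨Or.inr h, hz⟩
        rw [this]
        exact hfeas (step j) (Nat.le_of_lt (hlt j hj)) i
    -- gain bound
    have hgainb : ∀ j ∈ T, f (insert j (I (step j))) - f (I (step j)) ≤
        f (I (step j + 1)) - f (I (step j)) := by
      intro j hj
      obtain ⟨x, -, -, hIeq, hmax⟩ := hstep (step j) (hlt j hj)
      rw [hIeq]
      exact hmax j (hfeasins j hj)
    -- injectivity of step on T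
    have hinj : ∀ j₁ ∈ T, ∀ j₂ ∈ T, step j₁ = step j₂ → j₁ = j₂ := by
      intro j₁ h₁ j₂ h₂ heq
      obtain ⟨y₁, hy₁X, hy₁m, hy₁m1⟩ := hy j₁ h₁
      obtain ⟨y₂, hy₂X, hy₂m, hy₂m1⟩ := hy j₂ h₂
      obtain ⟨x, hx, -, hIeq, -⟩ := hstep (step j₁) (hlt j₁ h₁)
      have hyx₁ : y₁ = x := by
        rw [hIeq] at hy₁m1
        rcases Finset.mem_insert.mp hy₁m1 with h | h
        · exact h
        · exact absurd h hy₁m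
      have hyx₂ : y₂ = x := by
        rw [heq] at hIeq
        rw [hIeq] at hy₂m1
        rcases Finset.mem_insert.mp hy₂m1 with h | h
        · exact h
        · exact absurd h hy₂m
      have hblkeq : blk j₁ = blk j₂ := by
        by_contra hne'
        exact Finset.disjoint_left.mp (hblocks (blk j₁) (blk j₂) hne')
          (hyx₁ ▸ hy₁X) (hyx₂ ▸ hy₂X)
      exact Finset.card_le_one.mp (hJfeas (blk j₁))
        j₁ (Finset.mem_inter.mpr ⟨hTJ j₁ h₁, hblk j₁⟩)
        j₂ (Finset.mem_inter.mpr ⟨hTJ j₂ h₂, hblkeq ▸ hblk j₂⟩)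
    -- sum of marginals is at most f (I n)
    have hsumb : ∑ j ∈ T, (f (insert j (I (step j))) - f (I (step j))) ≤ f (I n) := by
      have h1 : ∑ j ∈ T, (f (insert j (I (step j))) - f (I (step j))) ≤
          ∑ j ∈ T, (f (I (step j + 1)) - f (I (step j))) :=
        Finset.sum_le_sum hgainb
      have h2 : ∑ j ∈ T, (f (I (step j + 1)) - f (I (step j))) =
          ∑ m ∈ T.image step, (f (I (m + 1)) - f (I m)) :=
        by rw [Finset.sum_image hinj]
      have h3 : ∑ m ∈ T.image step, (f (I (m + 1)) - f (I m)) ≤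
          ∑ m ∈ Finset.range n, (f (I (m + 1)) - f (I m)) := by
        apply Finset.sum_le_sum_of_subset_of_nonneg
        · intro m hm
          obtain ⟨j, hj, hjm⟩ := Finset.mem_image.mp hm
          exact Finset.mem_range.mpr (hjm ▸ hlt j hj)
        · intro m hm _
          exact hgain_nonneg m (Finset.mem_range.mp hm)
      have h4 : ∑ m ∈ Finset.range n, (f (I (m + 1)) - f (I m)) = f (I n) := by
        rw [Finset.sum_range_sub (fun m => f (I m)), hI0, hf0, sub_zero]
      linarith
    -- put it together
    have hJsub : J ⊆ I n ∪ T := by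
      intro j hj
      by_cases h : j ∈ I n
      · exact Finset.mem_union_left _ h
      · exact Finset.mem_union_right _ (Finset.mem_sdiff.mpr ⟨hj, h⟩)
    have c1 : f J ≤ f (I n ∪ T) := f_subset_le f hmono hJsub
    have c2 : f (I n ∪ T) ≤ f (I n) +
        ∑ j ∈ T, (f (insert j (I (step j))) - f (I (step j))) :=
      sum_marginal f hsub (I n) (fun j => I (step j)) T hTnotin
        (fun j hj => hmonoI (step j) n (Nat.le_of_lt (hlt j hj)) le_rfl)
    linarith
  have hsup := Finset.sup'_le (Finset.filter_nonempty_iff.mpr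
      ⟨∅, Finset.mem_univ _, fun i => by simp⟩) f hkey
  linarith
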